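/- arXiv:2011.01821 — 8 statements merged into one kernel-verified Lean document; each statement's English description precedes it below -/
import Mathlib

section
/- Assume furthermore that every h ∈ H is weakly dominated by a Pareto-optimal element: for each h ∈ H there exists a Pareto optimal h₀ ∈ H with r_a(h₀) ≤ r_a(h) for all a ∈ A. Then the Pareto front is convex in the following sense: for all Pareto optimal h', h'' ∈ H and every λ ∈ [0,1], there exists a Pareto optimal g ∈ H with r_a(g) ≤ λ·r_a(h') + (1−λ)·r_a(h'') for every a ∈ A. -/
/-- Pareto optimality of `h` in the hypothesis class `H` w.r.t. the group risks `r`. -/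
def ParetoOpt {A E : Type*} (H : Set E) (r : A → E → ℝ) (h : E) : Prop :=
  h ∈ H ∧ ¬ ∃ h' ∈ H, (∀ a, r a h' ≤ r a h) ∧ ∃ a, r a h' < r a h

/-- For a convex hypothesis class and convex risks, if every point of H is
weakly dominated by a Pareto-optimal element, then the Pareto front is convex. -/
theorem pareto_front_convex {A E : Type*} [Fintype A] [Nonempty A]
    [AddCommGroup E] [Module ℝ E]
    (H : Set E) (hH : Convex ℝ H)
    (r : A → E → ℝ) (hconv : ∀ a, ConvexOn ℝ H (r a))
    (hdom : ∀ h ∈ H, ∃ h₀, ParetoOpt H r h₀ ∧ ∀ a, r a h₀ ≤ r a h) :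
    ∀ h' h'', ParetoOpt H r h' → ParetoOpt H r h'' →
      ∀ lam : ℝ, lam ∈ Set.Icc (0 : ℝ) 1 →
        ∃ g, ParetoOpt H r g ∧ ∀ a, r a g ≤ lam * r a h' + (1 - lam) * r a h'' := by
  intro h' h'' hp' hp'' lam hlam
  obtain ⟨hlam0, hlam1⟩ := hlam
  have hmem : lam • h' + (1 - lam) • h'' ∈ H :=
    hH hp'.1 hp''.1 hlam0 (by linarith) (by ring)
  obtain ⟨g, hg, hgle⟩ := hdom _ hmem
  refine ⟨g, hg, fun a => ?_⟩
  exact (hgle a).trans ((hconv a).2 hp'.1 hp''.1 hlam0 (by linarith) (by ring))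
end

section
/- (Geoffrion's scalarization theorem, used as Theorem 1 part 2.) If h̄ ∈ H is properly Pareto optimal, then there exists a weight vector μ : A → ℝ with μ(a) > 0 for all a ∈ A and ∑_{a∈A} μ(a) = 1 such that ∑_{a∈A} μ(a)·r_a(h̄) ≤ ∑_{a∈A} μ(a)·r_a(h) for every h ∈ H. -/
open Finset Filter Topology

lemma nonneg_of_forall_nonneg_lt_mul {a b : ℝ} (h : ∀ t, 0 ≤ t → a < t * b) : 0 ≤ b := by
  by_contra! hb
  have ha : a < 0 := by simpa using h 0 le_rfl
  have := h (a / b) (div_nonneg_of_nonpos ha.le hb.le)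
  rw [div_mul_cancel₀ a hb.ne] at this
  exact this.false

lemma nonneg_of_forall_pos_lt_add_mul {s c : ℝ} (h : ∀ ε > 0, 0 < s + ε * c) : 0 ≤ s := by
  have hlim : Tendsto (fun ε => s + ε * c) (𝓝[>] 0) (𝓝 s) := by
    have : Continuous fun ε : ℝ => s + ε * c := by fun_prop
    simpa using (this.tendsto 0).mono_left nhdsWithin_le_nhds
  exact ge_of_tendsto hlim (eventually_nhdsWithin_of_forall fun ε hε => (h ε hε).le)

lemma inv_sum_smul_mem_stdSimplex {ι : Type*} [Fintype ι] {w : ι → ℝ} (hw : ∀ i, 0 ≤ w i)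
    (hsum : 0 < ∑ i, w i) : (∑ i, w i)⁻¹ • w ∈ stdSimplex ℝ ι :=
  ⟨fun i => smul_nonneg (inv_nonneg.2 hsum.le) (hw i), by
    simp only [Pi.smul_apply, smul_eq_mul, ← mul_sum, inv_mul_cancel₀ hsum.ne']⟩

section StrictUpperImage

variable {K E : Type*}

def strictUpperImage (C : Set E) (f : K → E → ℝ) : Set (K → ℝ) :=
  {y | ∃ x ∈ C, ∀ k, f k x < y k}

lemma convex_strictUpperImage [AddCommGroup E] [Module ℝ E] {C : Set E} {f : K → E → ℝ}
    (hC : Convex ℝ C) (hf : ∀ k, ConvexOn ℝ C (f k)) : Convex ℝ (strictUpperImage C f) := by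
  rintro y₁ ⟨x₁, hx₁, h₁⟩ y₂ ⟨x₂, hx₂, h₂⟩ a b ha hb hab
  refine ⟨a • x₁ + b • x₂, hC hx₁ hx₂ ha hb hab, fun k => ?_⟩
  have hcomb : a * f k x₁ + b * f k x₂ < a * y₁ k + b * y₂ k := by
    rcases ha.eq_or_lt with rfl | ha
    · simp only [zero_add] at hab
      subst hab
      simpa using h₂ k
    · nlinarith [h₁ k, h₂ k]
  calc f k (a • x₁ + b • x₂) ≤ a • f k x₁ + b • f k x₂ := (hf k).2 hx₁ hx₂ ha hb hab
    _ < (a • y₁ + b • y₂) k := by simpa using hcomb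

lemma isOpen_strictUpperImage [Finite K] (C : Set E) (f : K → E → ℝ) :
    IsOpen (strictUpperImage C f) := by
  have : strictUpperImage C f = ⋃ x ∈ C, ⋂ k, {y : K → ℝ | f k x < y k} := by
    ext y; simp [strictUpperImage]
  rw [this]
  exact isOpen_biUnion fun x _ => isOpen_iInter_of_finite fun k =>
    isOpen_lt continuous_const (continuous_apply k)

lemma add_mem_strictUpperImage {C : Set E} {f : K → E → ℝ} {y z : K → ℝ}
    (hy : y ∈ strictUpperImage C f) (hz : 0 ≤ z) : y + z ∈ strictUpperImage C f := by
  obtain ⟨x, hx, hlt⟩ := hy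
  exact ⟨x, hx, fun k => (hlt k).trans_le (le_add_of_nonneg_right (hz k))⟩

end StrictUpperImage

lemma ContinuousLinearMap.apply_eq_sum_mul_single {K : Type*} [Fintype K] [DecidableEq K]
    (L : (K → ℝ) →L[ℝ] ℝ) (y : K → ℝ) : L y = ∑ k, y k * L (Pi.single k 1) := by
  conv_lhs => rw [pi_eq_sum_univ' y]
  simp [map_sum, map_smul]

/-- Gordan's alternative for convex functions. -/
theorem exists_mem_stdSimplex_sum_mul_nonneg {K E : Type*} [Fintype K] [AddCommGroup E]
    [Module ℝ E] {C : Set E} (hC : Convex ℝ C) (hne : C.Nonempty) {f : K → E → ℝ}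
    (hf : ∀ k, ConvexOn ℝ C (f k)) (hnosol : ¬ ∃ x ∈ C, ∀ k, f k x < 0) :
    ∃ lam ∈ stdSimplex ℝ K, ∀ x ∈ C, 0 ≤ ∑ k, lam k * f k x := by
  classical
  have h0 : (0 : K → ℝ) ∉ strictUpperImage C f := fun ⟨x, hx, hlt⟩ => hnosol ⟨x, hx, hlt⟩
  obtain ⟨L, hL⟩ := geometric_hahn_banach_open_point (convex_strictUpperImage hC hf)
    (isOpen_strictUpperImage C f) h0
  rw [map_zero] at hL
  set w : K → ℝ := fun k => -L (Pi.single k 1)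
  have hLw : ∀ y, L y = -∑ k, w k * y k := fun y => by
    simp [w, L.apply_eq_sum_mul_single y, mul_comm]
  have hshift : ∀ x ∈ C, ∀ ε > 0, (fun k => f k x + ε) ∈ strictUpperImage C f :=
    fun x hx ε hε => ⟨x, hx, fun k => lt_add_of_pos_right _ hε⟩
  obtain ⟨y₀, hy₀⟩ : (strictUpperImage C f).Nonempty :=
    let ⟨x₀, hx₀⟩ := hne; ⟨_, hshift x₀ hx₀ 1 one_pos⟩
  have hw_nonneg : ∀ k, 0 ≤ w k := fun k =>
    nonneg_of_forall_nonneg_lt_mul (a := L y₀) fun t ht => by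
    have := hL _ (add_mem_strictUpperImage hy₀ (Pi.single_nonneg.2 ht : 0 ≤ Pi.single k t))
    rw [map_add, hLw (Pi.single k t)] at this
    simp only [Pi.single_apply, mul_ite, mul_zero, sum_ite_eq', mem_univ, if_true] at this
    linarith
  have hw_sum : 0 < ∑ k, w k := by
    refine (sum_nonneg fun k _ => hw_nonneg k).lt_of_ne fun hsum => (hL _ hy₀).ne ?_
    have hw0 := (sum_eq_zero_iff_of_nonneg fun k _ => hw_nonneg k).1 hsum.symm
    simp [hLw, hw0]
  refine ⟨_, inv_sum_smul_mem_stdSimplex hw_nonneg hw_sum, fun x hx => ?_⟩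
  have hcomb : 0 ≤ ∑ k, w k * f k x :=
    nonneg_of_forall_pos_lt_add_mul (c := ∑ k, w k) fun ε hε => by
    have := hL _ (hshift x hx ε hε)
    simp only [hLw, mul_add, sum_add_distrib, ← sum_mul] at this
    linarith
  simpa [mul_assoc, ← mul_sum] using mul_nonneg (inv_nonneg.2 hw_sum.le) hcomb

lemma exists_add_mul_nonneg_of_proper {A E : Type*} {H : Set E} {r : A → E → ℝ} {hbar : E}
    {M : ℝ} (hM : 0 ≤ M)
    (hprop : ∀ a : A, ∀ h ∈ H, r a h < r a hbar →
      ∃ a' : A, r a' hbar < r a' h ∧ r a hbar - r a h ≤ M * (r a' h - r a' hbar))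
    (i : A) {h : E} (hh : h ∈ H) : ∃ j, 0 ≤ r i h - r i hbar + M * (r j h - r j hbar) := by
  by_cases hlt : r i h < r i hbar
  · obtain ⟨j, -, hj⟩ := hprop i h hh hlt
    exact ⟨j, by linarith⟩
  · exact ⟨i, add_nonneg (by linarith) (mul_nonneg hM (by linarith))⟩

lemma sum_sum_mul_add_mul {ι : Type*} [Fintype ι] {lam : ι → ι → ℝ}
    (hlam : ∀ i, ∑ j, lam i j = 1) (g : ι → ℝ) (M : ℝ) :
    ∑ i, ∑ j, lam i j * (g i + M * g j) = ∑ j, (1 + M * ∑ i, lam i j) * g j := by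
  simp only [mul_add, sum_add_distrib, ← sum_mul, hlam, one_mul, add_mul]
  rw [sum_comm]
  simp only [mul_sum, sum_mul]
  congr 1
  exact sum_congr rfl fun j _ => sum_congr rfl fun i _ => by ring

/-- Geoffrion: a properly Pareto optimal point of a convex multiobjective
problem solves a linear weighting problem with strictly positive weights summing to 1. -/
theorem geoffrion_scalarization {A E : Type*} [Fintype A] [Nonempty A]
    [AddCommGroup E] [Module ℝ E]
    (H : Set E) (hH : Convex ℝ H)
    (r : A → E → ℝ) (hconv : ∀ a, ConvexOn ℝ H (r a))
    (hbar : E)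
    (hPO : ParetoOpt H r hbar)
    (hproper : ∃ M > (0 : ℝ), ∀ a : A, ∀ h ∈ H, r a h < r a hbar →
      ∃ a' : A, r a' hbar < r a' h ∧ r a hbar - r a h ≤ M * (r a' h - r a' hbar)) :
    ∃ μ : A → ℝ, (∀ a, 0 < μ a) ∧ (∑ a, μ a) = 1 ∧
      ∀ h ∈ H, ∑ a, μ a * r a hbar ≤ ∑ a, μ a * r a h := by
  obtain ⟨M, hM, hprop⟩ := hproper
  set g : A → E → ℝ := fun a x => r a x - r a hbar
  have hg : ∀ a, ConvexOn ℝ H (g a) := fun a => (hconv a).sub (concaveOn_const _ hH)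
  choose lam hlam hcomb using fun i => exists_mem_stdSimplex_sum_mul_nonneg hH ⟨hbar, hPO.1⟩
    (f := fun j x => g i x + M * g j x) (fun j => (hg i).add ((hg j).smul hM.le))
    fun ⟨x, hx, hneg⟩ => (exists_add_mul_nonneg_of_proper hM.le hprop i hx).elim
      fun j hj => (hneg j).not_ge hj
  set w : A → ℝ := fun j => 1 + M * ∑ i, lam i j
  have hw : ∀ j, 0 < w j := fun j =>
    add_pos_of_pos_of_nonneg one_pos (mul_nonneg hM.le (sum_nonneg fun i _ => (hlam i).1 j))
  have hwg : ∀ x ∈ H, 0 ≤ ∑ j, w j * g j x := fun x hx => by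
    rw [← sum_sum_mul_add_mul (fun i => (hlam i).2)]
    exact sum_nonneg fun i _ => hcomb i x hx
  have hsum : 0 < ∑ j, w j := sum_pos (fun j _ => hw j) univ_nonempty
  refine ⟨(∑ j, w j)⁻¹ • w, fun j => smul_pos (inv_pos.2 hsum) (hw j),
    (inv_sum_smul_mem_stdSimplex (fun j => (hw j).le) hsum).2, fun h hh => ?_⟩
  have := mul_nonneg (inv_pos.2 hsum).le (hwg h hh)
  simp only [g, mul_sub, sum_sub_distrib, mul_sum] at this
  simpa [mul_assoc] using this
end

section
/- For every weight vector μ with μ(a) > 0 for all a ∈ A, the predictor h^μ minimizes the linearly weighted Brier-score risk: for every predictor h : X → (Y → ℝ), ∑_{a∈A} μ(a)·r^BS_a(h^μ) ≤ ∑_{a∈A} μ(a)·r^BS_a(h). -/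
open Finset

noncomputable section

variable {X Y A : Type*}

/-- Marginal `p(x,a) = ∑_y p(x,y,a)`. -/
def pXA [Fintype Y] (p : X → Y → A → ℝ) (x : X) (a : A) : ℝ := ∑ y, p x y a

/-- Marginal `p(a) = ∑_{x,y} p(x,y,a)`. -/
def pA [Fintype X] [Fintype Y] (p : X → Y → A → ℝ) (a : A) : ℝ := ∑ x, ∑ y, p x y a

/-- Conditional `p(x|a) = p(x,a)/p(a)`. -/
def pXgA [Fintype X] [Fintype Y] (p : X → Y → A → ℝ) (x : X) (a : A) : ℝ :=
  pXA p x a / pA p a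

/-- Conditional `p(y|x,a) = p(x,y,a)/p(x,a)`. -/
def pYgXA [Fintype Y] (p : X → Y → A → ℝ) (y : Y) (x : X) (a : A) : ℝ :=
  p x y a / pXA p x a

/-- Conditional `p(x,y|a) = p(x,y,a)/p(a)`. -/
def pXYgA [Fintype X] [Fintype Y] (p : X → Y → A → ℝ) (x : X) (y : Y) (a : A) : ℝ :=
  p x y a / pA p a

/-- The optimal predictor of the linear weighting problem,
`h^μ(x)(y) = (∑_a μ(a) p(x|a) p(y|x,a)) / (∑_a μ(a) p(x|a))`. -/
def hMu [Fintype X] [Fintype Y] [Fintype A] (p : X → Y → A → ℝ) (μ : A → ℝ)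
    (x : X) (y : Y) : ℝ :=
  (∑ a, μ a * pXgA p x a * pYgXA p y x a) / (∑ a, μ a * pXgA p x a)

/-- Brier-score group risk
`r^BS_a(h) = ∑_{x,y} p(x,y|a) ∑_{y'} (1[y'=y] − h(x)(y'))²`. -/
def rBS [Fintype X] [Fintype Y] [DecidableEq Y] (p : X → Y → A → ℝ) (a : A)
    (h : X → Y → ℝ) : ℝ :=
  ∑ x, ∑ y, pXYgA p x y a * ∑ y', ((if y' = y then (1 : ℝ) else 0) - h x y') ^ 2

/-- Cross-entropy group risk `r^CE_a(h) = −∑_{x,y} p(x,y|a) log h(x)(y)`. -/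
def rCE [Fintype X] [Fintype Y] (p : X → Y → A → ℝ) (a : A) (h : X → Y → ℝ) : ℝ :=
  -∑ x, ∑ y, pXYgA p x y a * Real.log (h x y)


private lemma quad_min_aux (S T t : ℝ) (hS : 0 < S) :
    T - 2 * T * (T / S) + S * (T / S) ^ 2 ≤ T - 2 * T * t + S * t ^ 2 := by
  have h1 : T - 2 * T * (T / S) + S * (T / S) ^ 2 = T - T ^ 2 / S := by
    field_simp; ring
  have h2 : 0 ≤ (S * t - T) ^ 2 / S := div_nonneg (sq_nonneg _) hS.le
  rw [h1]
  have h3 : (S * t - T) ^ 2 / S = S * t ^ 2 - 2 * T * t + T ^ 2 / S := by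
    field_simp; ring
  nlinarith [h2, h3]

/-- `h^mu` minimizes the linearly weighted Brier-score risk. -/
theorem hMu_minimizes_weighted_brier [Fintype X] [Fintype Y] [Fintype A]
    [Nonempty X] [Nonempty Y] [Nonempty A] [DecidableEq Y]
    (p : X → Y → A → ℝ)
    (hpos : ∀ x y a, 0 < p x y a)
    (hsum : ∑ x, ∑ y, ∑ a, p x y a = 1)
    (μ : A → ℝ) (hμ : ∀ a, 0 < μ a)
    (h : X → Y → ℝ) :
    ∑ a, μ a * rBS p a (hMu p μ) ≤ ∑ a, μ a * rBS p a h := by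
  classical
  have hpA : ∀ a, 0 < pA p a := fun a =>
    Finset.sum_pos (fun x _ => Finset.sum_pos (fun y _ => hpos x y a) univ_nonempty)
      univ_nonempty
  have hpXA : ∀ x a, 0 < pXA p x a := fun x a =>
    Finset.sum_pos (fun y _ => hpos x y a) univ_nonempty
  set S : X → ℝ := fun x => ∑ a, μ a * pXgA p x a with hSdef
  set T : X → Y → ℝ := fun x y' => ∑ a, μ a * pXYgA p x y' a with hTdef
  have hS : ∀ x, 0 < S x := fun x =>
    Finset.sum_pos (fun a _ => mul_pos (hμ a) (div_pos (hpXA x a) (hpA a))) univ_nonempty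
  have hMufrac : ∀ x y', hMu p μ x y' = T x y' / S x := by
    intro x y'
    unfold hMu
    congr 1
    refine Finset.sum_congr rfl fun a _ => ?_
    have key : pXgA p x a * pYgXA p y' x a = pXYgA p x y' a := by
      unfold pXgA pYgXA pXYgA
      rw [div_mul_div_comm, mul_comm (pA p a) (pXA p x a),
        mul_div_mul_left _ _ (hpXA x a).ne']
    rw [mul_assoc, key]
  have e1 : ∀ (x : X) (y' : Y) (t : ℝ),
      ∑ a, ∑ y, μ a * pXYgA p x y a * ((if y' = y then (1 : ℝ) else 0) - t) ^ 2
        = T x y' - 2 * T x y' * t + S x * t ^ 2 := by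
    intro x y' t
    have inner : ∀ a, ∑ y, μ a * pXYgA p x y a * ((if y' = y then (1 : ℝ) else 0) - t) ^ 2
        = (μ a * pXYgA p x y' a) - 2 * (μ a * pXYgA p x y' a) * t
          + (μ a * pXgA p x a) * t ^ 2 := by
      intro a
      have hy : ∑ y, pXYgA p x y a = pXgA p x a := by
        unfold pXYgA pXgA pXA
        rw [← Finset.sum_div]
      calc ∑ y, μ a * pXYgA p x y a * ((if y' = y then (1 : ℝ) else 0) - t) ^ 2
          = ∑ y, ((if y' = y then
                (μ a * pXYgA p x y a) - 2 * (μ a * pXYgA p x y a) * t else 0)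
              + μ a * pXYgA p x y a * t ^ 2) := by
            refine Finset.sum_congr rfl fun y _ => ?_
            split_ifs <;> ring
        _ = (μ a * pXYgA p x y' a) - 2 * (μ a * pXYgA p x y' a) * t
              + (μ a * pXgA p x a) * t ^ 2 := by
            rw [Finset.sum_add_distrib, Finset.sum_ite_eq]
            simp only [Finset.mem_univ, if_true]
            rw [← Finset.sum_mul, ← Finset.mul_sum, hy]
    calc ∑ a, ∑ y, μ a * pXYgA p x y a * ((if y' = y then (1 : ℝ) else 0) - t) ^ 2
        = ∑ a, ((μ a * pXYgA p x y' a) - 2 * (μ a * pXYgA p x y' a) * t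
            + (μ a * pXgA p x a) * t ^ 2) := Finset.sum_congr rfl fun a _ => inner a
      _ = T x y' - 2 * T x y' * t + S x * t ^ 2 := by
          simp only [hTdef, hSdef]
          simp only [Finset.sum_add_distrib, Finset.sum_sub_distrib, ← Finset.sum_mul,
            ← Finset.mul_sum]
  have hrearr : ∀ h' : X → Y → ℝ,
      ∑ a, μ a * rBS p a h' =
      ∑ x, ∑ y', (T x y' - 2 * T x y' * h' x y' + S x * (h' x y') ^ 2) := by
    intro h'
    calc ∑ a, μ a * rBS p a h'
        = ∑ a, ∑ x, ∑ y, ∑ y',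
            μ a * pXYgA p x y a * ((if y' = y then (1 : ℝ) else 0) - h' x y') ^ 2 := by
          refine Finset.sum_congr rfl fun a _ => ?_
          unfold rBS
          rw [Finset.mul_sum]
          refine Finset.sum_congr rfl fun x _ => ?_
          rw [Finset.mul_sum]
          refine Finset.sum_congr rfl fun y _ => ?_
          rw [← mul_assoc, Finset.mul_sum]
      _ = ∑ x, ∑ a, ∑ y, ∑ y',
            μ a * pXYgA p x y a * ((if y' = y then (1 : ℝ) else 0) - h' x y') ^ 2 :=
          by rw [Finset.sum_comm]
      _ = ∑ x, ∑ y', ∑ a, ∑ y,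
            μ a * pXYgA p x y a * ((if y' = y then (1 : ℝ) else 0) - h' x y') ^ 2 := by
          refine Finset.sum_congr rfl fun x _ => ?_
          calc ∑ a, ∑ y, ∑ y',
                μ a * pXYgA p x y a * ((if y' = y then (1 : ℝ) else 0) - h' x y') ^ 2
              = ∑ a, ∑ y', ∑ y,
                μ a * pXYgA p x y a * ((if y' = y then (1 : ℝ) else 0) - h' x y') ^ 2 :=
              Finset.sum_congr rfl fun a _ => by rw [Finset.sum_comm]
            _ = _ := by rw [Finset.sum_comm]
      _ = ∑ x, ∑ y', (T x y' - 2 * T x y' * h' x y' + S x * (h' x y') ^ 2) := by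
          refine Finset.sum_congr rfl fun x _ => Finset.sum_congr rfl fun y' _ => ?_
          exact e1 x y' (h' x y')
  rw [hrearr, hrearr]
  refine Finset.sum_le_sum fun x _ => Finset.sum_le_sum fun y' _ => ?_
  rw [hMufrac x y']
  exact quad_min_aux (S x) (T x y') (h x y') (hS x)

end
end

section
/- For every weight vector μ with μ(a) > 0 for all a ∈ A, the predictor h^μ minimizes the linearly weighted cross-entropy risk: for every predictor h : X → (Y → ℝ) such that h(x)(y) > 0 for all x, y and ∑_y h(x)(y) = 1 for all x, one has ∑_{a∈A} μ(a)·r^CE_a(h^μ) ≤ ∑_{a∈A} μ(a)·r^CE_a(h). -/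
open Finset

noncomputable section

variable {X Y A : Type*}

/-- `h^mu` minimizes the linearly weighted cross-entropy risk over
strictly positive normalized predictors. -/
theorem hMu_minimizes_weighted_crossentropy [Fintype X] [Fintype Y] [Fintype A]
    [Nonempty X] [Nonempty Y] [Nonempty A]
    (p : X → Y → A → ℝ)
    (hpos : ∀ x y a, 0 < p x y a)
    (hsum : ∑ x, ∑ y, ∑ a, p x y a = 1)
    (μ : A → ℝ) (hμ : ∀ a, 0 < μ a)
    (h : X → Y → ℝ)
    (hhpos : ∀ x y, 0 < h x y)
    (hhnorm : ∀ x, ∑ y, h x y = 1) :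
    ∑ a, μ a * rCE p a (hMu p μ) ≤ ∑ a, μ a * rCE p a h := by
  classical
  have hpA : ∀ a, 0 < pA p a := fun a =>
    Finset.sum_pos (fun x _ => Finset.sum_pos (fun y _ => hpos x y a) univ_nonempty)
      univ_nonempty
  have hpXA : ∀ x a, 0 < pXA p x a := fun x a =>
    Finset.sum_pos (fun y _ => hpos x y a) univ_nonempty
  set N : X → Y → ℝ := fun x y => ∑ a, μ a * pXYgA p x y a with hNdef
  set S : X → ℝ := fun x => ∑ a, μ a * pXgA p x a with hSdef
  have hNpos : ∀ x y, 0 < N x y := fun x y =>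
    Finset.sum_pos (fun a _ => mul_pos (hμ a) (div_pos (hpos x y a) (hpA a))) univ_nonempty
  have hSpos : ∀ x, 0 < S x := fun x =>
    Finset.sum_pos (fun a _ => mul_pos (hμ a) (div_pos (hpXA x a) (hpA a))) univ_nonempty
  have hmul : ∀ x y a, μ a * pXgA p x a * pYgXA p y x a = μ a * pXYgA p x y a := by
    intro x y a
    unfold pXgA pYgXA pXYgA
    rw [mul_assoc]
    congr 1
    field_simp [(hpXA x a).ne', (hpA a).ne']
  have hhMu : ∀ x y, hMu p μ x y = N x y / S x := by
    intro x y
    unfold hMu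
    congr 1
    exact Finset.sum_congr rfl fun a _ => hmul x y a
  have hNsum : ∀ x, ∑ y, N x y = S x := by
    intro x
    rw [hNdef]
    rw [Finset.sum_comm]
    refine Finset.sum_congr rfl fun a _ => ?_
    rw [← Finset.mul_sum]
    congr 1
    unfold pXYgA pXgA pXA
    rw [← Finset.sum_div]
  have hMupos : ∀ x y, 0 < hMu p μ x y := by
    intro x y; rw [hhMu]; exact div_pos (hNpos x y) (hSpos x)
  have key : ∀ g : X → Y → ℝ,
      ∑ a, μ a * rCE p a g = -∑ x, ∑ y, N x y * Real.log (g x y) := by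
    intro g
    unfold rCE
    simp only [Finset.mul_sum, mul_neg, ← mul_assoc, ← Finset.sum_neg_distrib, neg_inj]
    rw [Finset.sum_comm]
    refine Finset.sum_congr rfl fun x _ => ?_
    rw [Finset.sum_comm]
    refine Finset.sum_congr rfl fun y _ => ?_
    rw [Finset.sum_neg_distrib, neg_inj]
    exact (Finset.sum_mul Finset.univ (fun a => μ a * pXYgA p x y a) (Real.log (g x y))).symm
  rw [key, key, neg_le_neg_iff]
  refine Finset.sum_le_sum fun x _ => ?_
  have step : ∀ y : Y,
      N x y * Real.log (h x y) - N x y * Real.log (hMu p μ x y)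
        ≤ h x y * S x - N x y := by
    intro y
    have ht : (0:ℝ) < h x y / hMu p μ x y := div_pos (hhpos x y) (hMupos x y)
    have hlog := Real.log_le_sub_one_of_pos ht
    have h1 : N x y * Real.log (h x y) - N x y * Real.log (hMu p μ x y)
        = N x y * Real.log (h x y / hMu p μ x y) := by
      rw [Real.log_div (hhpos x y).ne' (hMupos x y).ne']; ring
    have h2 : N x y * (h x y / hMu p μ x y - 1) = h x y * S x - N x y := by
      rw [hhMu]
      field_simp [(hNpos x y).ne', (hSpos x).ne']
    rw [h1, ← h2]
    exact mul_le_mul_of_nonneg_left hlog (hNpos x y).le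
  have hsumstep := Finset.sum_le_sum fun y (_ : y ∈ Finset.univ) => step y
  rw [Finset.sum_sub_distrib, Finset.sum_sub_distrib, ← Finset.sum_mul, hhnorm x,
    one_mul, hNsum x, sub_self] at hsumstep
  linarith


end
end

section
/- Assume the sensitive attribute is a deterministic function of the features: there is f : X → A such that for all x and a, p(x,a) > 0 if and only if a = f(x), and assume p(a) > 0 for every a ∈ A. Then for every weight vector μ with μ(a) > 0 for all a: h^μ(x)(y) = p(y|x, f(x)) for all x, y; consequently every sensitive group attains its group Bayes risk, r^BS_a(h^μ) = ∑_{x,y} p(x,y|a) · ∑_{y'} (1[y'=y] − p(y'|x,a))², independently of μ. -/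
open Finset

noncomputable section

variable {X Y A : Type*}

/-- when the sensitive attribute is a deterministic function of the
features, `h^mu(x) = p(y|x, f(x))` and every group attains its Bayes Brier risk,
independently of `μ`. -/
theorem deterministic_attribute_gives_bayes_risks [Fintype X] [Fintype Y] [Fintype A]
    [Nonempty X] [Nonempty Y] [Nonempty A] [DecidableEq Y]
    (p : X → Y → A → ℝ)
    (hnonneg : ∀ x y a, 0 ≤ p x y a)
    (hsum : ∑ x, ∑ y, ∑ a, p x y a = 1)
    (f : X → A)
    (hdet : ∀ x a, 0 < pXA p x a ↔ a = f x)
    (hpA : ∀ a, 0 < pA p a) :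
    ∀ μ : A → ℝ, (∀ a, 0 < μ a) →
      (∀ x y, hMu p μ x y = pYgXA p y x (f x)) ∧
      (∀ a, rBS p a (hMu p μ) =
        ∑ x, ∑ y, pXYgA p x y a *
          ∑ y', ((if y' = y then (1 : ℝ) else 0) - pYgXA p y' x a) ^ 2) := by
  intro μ hμ
  -- pXA is zero off the diagonal
  have hXA0 : ∀ x a, a ≠ f x → pXA p x a = 0 := by
    intro x a hne
    have hnn : 0 ≤ pXA p x a := Finset.sum_nonneg fun y _ => hnonneg x y a
    rcases hnn.lt_or_eq with h | h
    · exact absurd ((hdet x a).1 h) hne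
    · exact h.symm
  have hp0 : ∀ x y a, a ≠ f x → p x y a = 0 := by
    intro x y a hne
    have h1 : p x y a ≤ pXA p x a :=
      Finset.single_le_sum (fun y _ => hnonneg x y a) (Finset.mem_univ y)
    have := hXA0 x a hne
    nlinarith [hnonneg x y a]
  have hXApos : ∀ x, 0 < pXA p x (f x) := fun x => (hdet x (f x)).2 rfl
  have hXgApos : ∀ x, 0 < pXgA p x (f x) := fun x =>
    div_pos (hXApos x) (hpA (f x))
  have hmain : ∀ x y, hMu p μ x y = pYgXA p y x (f x) := by
    intro x y
    unfold hMu
    have hnum : ∀ y', (∑ a, μ a * pXgA p x a * pYgXA p y' x a) =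
        μ (f x) * pXgA p x (f x) * pYgXA p y' x (f x) := by
      intro y'
      refine Finset.sum_eq_single (f x) (fun a _ hne => ?_) (fun h => absurd (Finset.mem_univ _) h)
      have : pXgA p x a = 0 := by
        unfold pXgA; rw [hXA0 x a hne, zero_div]
      rw [this]; ring
    have hden : (∑ a, μ a * pXgA p x a) = μ (f x) * pXgA p x (f x) := by
      refine Finset.sum_eq_single (f x) (fun a _ hne => ?_) (fun h => absurd (Finset.mem_univ _) h)
      have : pXgA p x a = 0 := by
        unfold pXgA; rw [hXA0 x a hne, zero_div]
      rw [this]; ring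
    rw [hnum, hden]
    have h1 := hμ (f x)
    have h2 := hXgApos x
    field_simp
  refine ⟨hmain, fun a => ?_⟩
  unfold rBS
  refine Finset.sum_congr rfl fun x _ => Finset.sum_congr rfl fun y _ => ?_
  by_cases hax : a = f x
  · subst hax
    congr 1
    exact Finset.sum_congr rfl fun y' _ => by rw [hmain x y']
  · have : pXYgA p x y a = 0 := by
      unfold pXYgA; rw [hp0 x y a hax, zero_div]
    rw [this, zero_mul, zero_mul]

end
end

section
/- Let μ, η : A → ℝ with μ(a) ≥ 0 and η(a) ≥ 0 for all a ∈ A, and let I = {a ∈ A : η(a) > 0} be the support of η. If v ∈ R is μ-optimal and w ∈ R is (μ+η)-optimal, then either there exists j ∈ I with w(j) < v(j), or w(j) = v(j) for all j ∈ I. -/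
open Finset

/-- increasing the weights on a set of coordinates `I` either strictly
decreases some risk in `I`, or leaves all risks in `I` unchanged. -/
theorem weight_increase_monotonicity {A : Type*} [Fintype A] [Nonempty A]
    (R : Set (A → ℝ)) (hR : R.Nonempty)
    (μ η : A → ℝ) (hμ : ∀ a, 0 ≤ μ a) (hη : ∀ a, 0 ≤ η a)
    (v w : A → ℝ) (hv : v ∈ R) (hw : w ∈ R)
    (hvopt : ∀ u ∈ R, ∑ a, μ a * v a ≤ ∑ a, μ a * u a)
    (hwopt : ∀ u ∈ R, ∑ a, (μ a + η a) * w a ≤ ∑ a, (μ a + η a) * u a) :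
    (∃ j, 0 < η j ∧ w j < v j) ∨ (∀ j, 0 < η j → w j = v j) := by
  by_cases h : ∃ j, 0 < η j ∧ w j < v j
  · exact Or.inl h
  push_neg at h
  right
  have h1 := hvopt w hw
  have h2 := hwopt v hv
  have hkey : ∑ a, η a * w a ≤ ∑ a, η a * v a := by
    have := h2
    simp only [add_mul, Finset.sum_add_distrib] at this
    linarith
  have hle : ∀ a, η a * v a ≤ η a * w a := by
    intro a
    rcases lt_or_eq_of_le (hη a) with hpos | heq
    · exact mul_le_mul_of_nonneg_left (h a hpos) (le_of_lt hpos)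
    · simp [← heq]
  have heq : ∀ a ∈ Finset.univ, η a * v a = η a * w a := by
    have hsum : ∑ a, η a * v a ≤ ∑ a, η a * w a :=
      Finset.sum_le_sum fun a _ => hle a
    exact fun a ha =>
      (Finset.sum_eq_sum_iff_of_le (fun a _ => hle a)).mp (le_antisymm hsum hkey) a ha
  intro j hj
  have := heq j (Finset.mem_univ j)
  exact (mul_left_cancel₀ (ne_of_gt hj) this.symm)
end

section
/- Let μ ∈ Δ, i ∈ A, and λ ∈ [0,1). If v ∈ R is μ-optimal and w ∈ R is (λ·μ + (1−λ)·e^i)-optimal, then w(i) ≤ v(i). In particular, for any threshold c ∈ ℝ, if v(i) < c then w(i) < c, so the set N_i = {μ ∈ Δ : some μ-optimal risk vector has i-th coordinate below c} is star-shaped with respect to the vertex e^i. -/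
open Finset

/-- moving the weight vector towards the vertex `e^i` does not increase
the `i`-th coordinate of the optimal risk; hence the sets `N_i` are star-shaped
w.r.t. `e^i`. -/
theorem star_shaped_towards_vertex {A : Type*} [Fintype A] [Nonempty A] [DecidableEq A]
    (R : Set (A → ℝ)) (hR : R.Nonempty)
    (μ : A → ℝ) (hμ : (∀ a, 0 ≤ μ a) ∧ ∑ a, μ a = 1)
    (i : A) (lam : ℝ) (hlam0 : 0 ≤ lam) (hlam1 : lam < 1)
    (v w : A → ℝ) (hv : v ∈ R) (hw : w ∈ R)
    (hvopt : ∀ u ∈ R, ∑ a, μ a * v a ≤ ∑ a, μ a * u a)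
    (hwopt : ∀ u ∈ R,
      ∑ a, (lam * μ a + (1 - lam) * (if a = i then (1 : ℝ) else 0)) * w a ≤
        ∑ a, (lam * μ a + (1 - lam) * (if a = i then (1 : ℝ) else 0)) * u a) :
    w i ≤ v i ∧ ∀ c : ℝ, v i < c → w i < c := by
  have h1 := hvopt w hw
  have h2 := hwopt v hv
  have key : ∀ u : A → ℝ,
      ∑ a, (lam * μ a + (1 - lam) * (if a = i then (1 : ℝ) else 0)) * u a =
      lam * ∑ a, μ a * u a + (1 - lam) * u i := by
    intro u
    rw [Finset.mul_sum]
    have : ∀ a : A, (lam * μ a + (1 - lam) * (if a = i then (1 : ℝ) else 0)) * u a =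
        lam * (μ a * u a) + (1 - lam) * ((if a = i then (1 : ℝ) else 0) * u a) := by
      intro a; ring
    simp_rw [this, Finset.sum_add_distrib, ← Finset.mul_sum, ite_mul, one_mul, zero_mul,
      Finset.sum_ite_eq' Finset.univ i u, if_pos (Finset.mem_univ i)]
  rw [key v, key w] at h2
  have hle : w i ≤ v i := by nlinarith
  exact ⟨hle, fun c hc => lt_of_le_of_lt hle hc⟩
end

section
/- Let ℓ : (Y → ℝ) → Y → ℝ be an arbitrary loss function and define the group risk of a predictor h by r_a(h) = ∑_{x,y} p(x,y|a) · ℓ(h(x), y). Then for every weight vector μ with μ(a) > 0 for all a ∈ A and every predictor h : X → (Y → ℝ), the weighted risk is an expectation under the tilted mixture: ∑_{a∈A} μ(a)·r_a(h) = ∑_x (∑_{a∈A} μ(a)·p(x|a)) · ∑_y h^μ(x)(y) · ℓ(h(x), y). -/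
open Finset

noncomputable section

variable {X Y A : Type*}

/-- for an arbitrary loss, the linearly weighted group risk is an
expectation under the tilted mixture defined by `h^mu`. -/
theorem weighted_risk_is_tilted_mixture_expectation [Fintype X] [Fintype Y] [Fintype A]
    [Nonempty X] [Nonempty Y] [Nonempty A]
    (p : X → Y → A → ℝ)
    (hpos : ∀ x y a, 0 < p x y a)
    (hsum : ∑ x, ∑ y, ∑ a, p x y a = 1)
    (ℓ : (Y → ℝ) → Y → ℝ)
    (μ : A → ℝ) (hμ : ∀ a, 0 < μ a)
    (h : X → Y → ℝ) :
    ∑ a, μ a * (∑ x, ∑ y, pXYgA p x y a * ℓ (h x) y) =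
      ∑ x, (∑ a, μ a * pXgA p x a) * ∑ y, hMu p μ x y * ℓ (h x) y := by
  have hXA : ∀ x a, 0 < pXA p x a := fun x a => Finset.sum_pos (fun y _ => hpos x y a) Finset.univ_nonempty
  have hA : ∀ a, 0 < pA p a := fun a => Finset.sum_pos (fun x _ => hXA x a) Finset.univ_nonempty
  have hS : ∀ x, 0 < ∑ a, μ a * pXgA p x a := fun x =>
    Finset.sum_pos (fun a _ => mul_pos (hμ a) (div_pos (hXA x a) (hA a))) Finset.univ_nonempty
  have key : ∀ x y a, μ a * pXYgA p x y a = μ a * pXgA p x a * pYgXA p y x a := by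
    intro x y a
    unfold pXYgA pXgA pYgXA
    rw [mul_assoc, div_mul_div_comm, mul_comm (pA p a), mul_div_mul_left _ _ (hXA x a).ne']
  calc ∑ a, μ a * (∑ x, ∑ y, pXYgA p x y a * ℓ (h x) y)
      = ∑ x, ∑ y, (∑ a, μ a * pXgA p x a * pYgXA p y x a) * ℓ (h x) y := by
        simp_rw [Finset.mul_sum, Finset.sum_mul]
        rw [Finset.sum_comm]
        refine Finset.sum_congr rfl fun x _ => ?_
        rw [Finset.sum_comm]
        refine Finset.sum_congr rfl fun y _ => Finset.sum_congr rfl fun a _ => ?_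
        rw [← mul_assoc, key]
    _ = ∑ x, (∑ a, μ a * pXgA p x a) * ∑ y, hMu p μ x y * ℓ (h x) y := by
        refine Finset.sum_congr rfl fun x _ => ?_
        rw [Finset.mul_sum]
        refine Finset.sum_congr rfl fun y _ => ?_
        rw [hMu, ← mul_assoc, mul_div_cancel₀ _ (hS x).ne']

end
end
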